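/- Let n ≥ 1, let R be an n×n real upper triangular matrix with positive diagonal entries r_11,…,r_nn, let σ > 0, and let B = {x ∈ ℤⁿ : ℓ ≤ x ≤ u} with ℓ, u ∈ ℤⁿ and ℓ_i < u_i for all i. Let x̂ be uniformly distributed over B, let ṽ ~ N(0, σ²Iₙ) be independent of x̂, set ỹ = R x̂ + ṽ, and let x^BB be the box-constrained Babai detector defined recursively for i = n,…,1 by c_i = (ỹ_i − ∑_{j=i+1}^n r_ij x_j^BB)/r_ii and x_i^BB = ℓ_i if ⌊c_i⌉ ≤ ℓ_i, x_i^BB = ⌊c_i⌉ if ℓ_i < ⌊c_i⌉ < u_i, x_i^BB = u_i if ⌊c_i⌉ ≥ u_i. Then Pr(x^BB = x̂) = ∏_{i=1}^n [ 1/(u_i − ℓ_i + 1) + ((u_i − ℓ_i)/(u_i − ℓ_i + 1)) · φ_σ(r_ii) ]. -/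

import Mathlib

open MeasureTheory ProbabilityTheory Matrix
open scoped ENNReal NNReal

/-- Nearest integer rounding, with ties broken toward the integer of smaller magnitude. -/
noncomputable def nround (x : ℝ) : ℤ :=
  if 0 ≤ x then ⌈x - 1 / 2⌉ else ⌊x + 1 / 2⌋

/-- Clamp the nearest integer of `c` to the interval `[a, b]`:
`a` if `⌊c⌉ ≤ a`, `b` if `⌊c⌉ ≥ b`, and `⌊c⌉` otherwise. -/
noncomputable def clampInt (a b : ℤ) (c : ℝ) : ℤ :=
  if nround c ≤ a then a
  else if b ≤ nround c then b
  else nround c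

/-- The box-constrained rounding detector computed from `d`. -/
noncomputable def roundDetector {n : ℕ} (l u : Fin n → ℤ) (d : Fin n → ℝ) : Fin n → ℤ :=
  fun i => clampInt (l i) (u i) (d i)

/-- Auxiliary recursion for the box-constrained Babai detector: `babaiAux R l u y k`
has the correct Babai values at indices `i` with `i + k ≥ n` (computed from the last
index downwards). -/
noncomputable def babaiAux {n : ℕ} (R : Matrix (Fin n) (Fin n) ℝ) (l u : Fin n → ℤ)
    (y : Fin n → ℝ) : ℕ → Fin n → ℤ
  | 0 => fun _ => 0
  | k + 1 => fun i =>
      if i.val + (k + 1) = n then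
        clampInt (l i) (u i)
          ((y i - ∑ j : Fin n, if i < j then R i j * (babaiAux R l u y k j : ℝ) else 0) / R i i)
      else babaiAux R l u y k i

/-- The box-constrained Babai detector computed from `y`, for upper triangular `R`:
for `i = n, …, 1`, `c_i = (y_i - ∑_{j>i} r_{ij} x_j^BB)/r_{ii}` and `x_i^BB` is `⌊c_i⌉`
clamped to `[l_i, u_i]`. -/
noncomputable def babaiDetector {n : ℕ} (R : Matrix (Fin n) (Fin n) ℝ) (l u : Fin n → ℤ)
    (y : Fin n → ℝ) : Fin n → ℤ :=
  babaiAux R l u y n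

/-- `phi σ ζ = (2/√(2π)) ∫_0^{ζ/(2σ)} exp(-t²/2) dt`. -/
noncomputable def phi (σ ζ : ℝ) : ℝ :=
  2 / Real.sqrt (2 * Real.pi) * ∫ t in (0:ℝ)..(ζ / (2 * σ)), Real.exp (-(t ^ 2) / 2)

/-!
Because `R` is upper triangular, back substitution from `R x̂ + v` reproduces `x̂` exactly when,
for every `i`, the clamped rounding of `x̂ᵢ + vᵢ / rᵢᵢ` returns `x̂ᵢ`; the later coordinates
are then already correct. Up to null sets this event is `|vᵢ| ≤ rᵢᵢ / 2` when `x̂ᵢ` is interior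
to `[ℓᵢ, uᵢ]`, and a half-line `vᵢ ≤ rᵢᵢ / 2` or `vᵢ ≥ -rᵢᵢ / 2` when it is an endpoint, of
Gaussian probability `φ_σ(rᵢᵢ)` resp. `(1 + φ_σ(rᵢᵢ)) / 2`. The coordinates of `v` are
independent, and averaging over the independent uniform `x̂` factorizes over `i`; the `i`-th
factor sums to `(1 + (uᵢ - ℓᵢ) φ_σ(rᵢᵢ)) / (uᵢ - ℓᵢ + 1)`.
-/

lemma abs_sub_nround_le (x : ℝ) : |x - nround x| ≤ 1 / 2 := by
  rw [abs_le]
  unfold nround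
  split_ifs
  · constructor <;> linarith [Int.le_ceil (x - 1 / 2), Int.ceil_lt_add_one (x - 1 / 2)]
  · constructor <;> linarith [Int.floor_le (x + 1 / 2), Int.lt_floor_add_one (x + 1 / 2)]

section Rounding
variable {m : ℤ} {x : ℝ}

lemma le_nround_of_sub_half_lt (h : m - 1 / 2 < x) : m ≤ nround x := by
  have := (abs_le.1 (abs_sub_nround_le x)).2
  have : ((m - 1 : ℤ) : ℝ) < nround x := by push_cast; linarith
  exact Int.sub_one_lt_iff.1 (by exact_mod_cast this)

lemma nround_le_of_lt_add_half (h : x < m + 1 / 2) : nround x ≤ m := by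
  have := (abs_le.1 (abs_sub_nround_le x)).1
  have : (nround x : ℝ) < ((m + 1 : ℤ) : ℝ) := by push_cast; linarith
  exact Int.lt_add_one_iff.1 (by exact_mod_cast this)

lemma sub_half_le_of_le_nround (h : m ≤ nround x) : m - 1 / 2 ≤ x := by
  have := (abs_le.1 (abs_sub_nround_le x)).1
  have : (m : ℝ) ≤ nround x := by exact_mod_cast h
  linarith

lemma le_add_half_of_nround_le (h : nround x ≤ m) : x ≤ m + 1 / 2 := by
  have := (abs_le.1 (abs_sub_nround_le x)).2
  have : (nround x : ℝ) ≤ m := by exact_mod_cast h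
  linarith

end Rounding

lemma clampInt_eq_iff {a b c : ℤ} (hab : a < b) (hac : a ≤ c) (hcb : c ≤ b) (x : ℝ) :
    clampInt a b x = c ↔ (c = a ∨ c ≤ nround x) ∧ (c = b ∨ nround x ≤ c) := by
  unfold clampInt
  split_ifs <;> omega

lemma measurable_nround : Measurable nround :=
  Measurable.ite (measurableSet_le measurable_const measurable_id)
    (Int.measurable_ceil.comp (measurable_id.sub measurable_const))
    (Int.measurable_floor.comp (measurable_id.add measurable_const))

lemma measurable_clampInt (a b : ℤ) : Measurable (clampInt a b) :=
  Measurable.ite (measurable_nround measurableSet_Iic) measurable_const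
    (Measurable.ite (measurable_nround measurableSet_Ici) measurable_const measurable_nround)

section Babai
variable {n : ℕ} (R : Matrix (Fin n) (Fin n) ℝ) (l u : Fin n → ℤ) (y : Fin n → ℝ)

lemma babaiAux_succ_apply (k : ℕ) (i : Fin n) :
    babaiAux R l u y (k + 1) i = if i + (k + 1) = n then clampInt (l i) (u i)
      ((y i - ∑ j, if i < j then R i j * (babaiAux R l u y k j : ℝ) else 0) / R i i)
    else babaiAux R l u y k i :=
  rfl

lemma babaiAux_eq_of_le {i : Fin n} {k m : ℕ} (hk : n ≤ i + k) (hkm : k ≤ m) :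
    babaiAux R l u y m i = babaiAux R l u y k i := by
  induction m, hkm using Nat.le_induction with
  | base => rfl
  | succ m hkm ih => rw [babaiAux_succ_apply, if_neg (by omega), ih]

lemma babaiDetector_apply (i : Fin n) :
    babaiDetector R l u y i = clampInt (l i) (u i)
      ((y i - ∑ j, if i < j then R i j * (babaiDetector R l u y j : ℝ) else 0) / R i i) := by
  obtain ⟨k, hk⟩ : ∃ k, i + (k + 1) = n := ⟨n - i - 1, by omega⟩
  rw [babaiDetector, babaiAux_eq_of_le R l u y (k := k + 1) (by omega) (by omega),
    babaiAux_succ_apply, if_pos hk]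
  refine congrArg (fun s => clampInt _ _ ((y i - s) / R i i)) (Finset.sum_congr rfl fun j _ => ?_)
  split_ifs with hij
  · have : i < (j : ℕ) := hij
    rw [babaiAux_eq_of_le R l u y (k := k) (m := n) (by omega) (by omega)]
  · rfl

lemma babaiDetector_eq_iff (x : Fin n → ℤ) :
    babaiDetector R l u y = x ↔ ∀ i, clampInt (l i) (u i)
      ((y i - ∑ j, if i < j then R i j * (x j : ℝ) else 0) / R i i) = x i := by
  constructor
  · rintro rfl i
    exact (babaiDetector_apply R l u y i).symm
  · intro hx
    funext i
    induction i using WellFoundedGT.induction with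
    | _ i ih =>
      rw [babaiDetector_apply, ← hx i]
      refine congrArg (fun s => clampInt _ _ ((y i - s) / R i i))
        (Finset.sum_congr rfl fun j _ => ?_)
      split_ifs with hij
      · rw [ih j hij]
      · rfl

variable {R}

lemma mulVec_apply_of_upper (hupper : ∀ i j : Fin n, j < i → R i j = 0) (x : Fin n → ℝ)
    (i : Fin n) : (R *ᵥ x) i = R i i * x i + ∑ j, if i < j then R i j * x j else 0 := by
  calc (R *ᵥ x) i = ∑ j, R i j * x j := rfl
    _ = ∑ j, ((if j = i then R i i * x i else 0) + if i < j then R i j * x j else 0) := by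
        refine Finset.sum_congr rfl fun j _ => ?_
        rcases lt_trichotomy i j with h | rfl | h
        · simp [h, h.ne']
        · simp
        · simp [h.ne, h.not_gt, hupper i j h]
    _ = _ := by
        rw [Finset.sum_add_distrib, Finset.sum_ite_eq' Finset.univ i fun _ => R i i * x i,
          if_pos (Finset.mem_univ i)]

lemma babaiDetector_mulVec_add_eq_iff (hupper : ∀ i j : Fin n, j < i → R i j = 0)
    (hdiag : ∀ i, R i i ≠ 0) (x : Fin n → ℤ) (w : Fin n → ℝ) :
    babaiDetector R l u (R *ᵥ (fun j => (x j : ℝ)) + w) = x ↔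
      ∀ i, clampInt (l i) (u i) (x i + w i / R i i) = x i := by
  rw [babaiDetector_eq_iff]
  refine forall_congr' fun i => ?_
  rw [Pi.add_apply, mulVec_apply_of_upper hupper, add_right_comm, add_sub_cancel_right, add_div,
    mul_div_cancel_left₀ _ (hdiag i)]

end Babai

open Set Real

lemma Int.cast_card_piFinset_Icc {ι : Type*} [Fintype ι] [DecidableEq ι] {l u : ι → ℤ}
    (hlu : ∀ i, l i ≤ u i) :
    ((Fintype.piFinset fun i => Finset.Icc (l i) (u i)).card : ℝ)
      = ∏ i, ((u i - l i + 1 : ℤ) : ℝ) := by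
  rw [Fintype.card_piFinset, Nat.cast_prod]
  refine Finset.prod_congr rfl fun i _ => ?_
  rw [← Int.cast_natCast, Int.card_Icc_of_le _ _ (by linarith [hlu i]), add_sub_right_comm]

lemma Finset.sum_Icc_ite_endpoints {a b : ℤ} (hab : a < b) (p q : ℝ) :
    ∑ c ∈ Finset.Icc a b, (if c = a ∨ c = b then p else q)
      = 2 * p + ((b - a - 1 : ℤ) : ℝ) * q := by
  rw [← Finset.Ioc_insert_left hab.le, Finset.sum_insert (by simp),
    ← Finset.Ioo_insert_right hab, Finset.sum_insert (by simp),
    Finset.sum_congr rfl fun c hc => if_neg (by rw [Finset.mem_Ioo] at hc; omega),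
    Finset.sum_const, Int.card_Ioo, nsmul_eq_mul, if_pos (Or.inl rfl), if_pos (Or.inr rfl),
    ← Int.cast_natCast, Int.toNat_of_nonneg (by omega)]
  ring

lemma ProbabilityTheory.IndepFun.measure_setOf_mem_eq_sum {Ω α β : Type*} [MeasurableSpace Ω]
    {P : Measure Ω} [MeasurableSpace α] [MeasurableSingletonClass α] [MeasurableSpace β]
    {X : Ω → α} {V : Ω → β} (hXV : IndepFun X V P) (hX : Measurable X) (hV : Measurable V)
    {B : Finset α} (hB : ∀ ω, X ω ∈ B) {S : α → Set β} (hS : ∀ b, MeasurableSet (S b)) :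
    P {ω | V ω ∈ S (X ω)} = ∑ b ∈ B, P (X ⁻¹' {b}) * P.map V (S b) := by
  have hunion : {ω | V ω ∈ S (X ω)} = ⋃ b ∈ B, X ⁻¹' {b} ∩ V ⁻¹' S b := by
    ext ω
    simp only [mem_ofPred_eq, mem_iUnion, mem_inter_iff, Set.mem_preimage, exists_prop]
    exact ⟨fun h => ⟨X ω, hB ω, rfl, h⟩, by rintro ⟨b, -, rfl, h⟩; exact h⟩
  rw [hunion, measure_biUnion_finset
    ((pairwiseDisjoint_fiber X _).mono fun _ => inter_subset_left)
    fun b _ => (hX (measurableSet_singleton b)).inter (hV (hS b))]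
  refine Finset.sum_congr rfl fun b _ => ?_
  rw [hXV.measure_inter_preimage_eq_mul _ _ (measurableSet_singleton b) (hS b),
    Measure.map_apply hV (hS b)]

section Gaussian
variable {σ : ℝ}

lemma mk_sq_ne_zero (hσ : σ ≠ 0) : (⟨σ ^ 2, sq_nonneg σ⟩ : ℝ≥0) ≠ 0 := by
  simpa [← NNReal.coe_ne_zero] using hσ

lemma gaussianPDFReal_zero_neg (v : ℝ≥0) (x : ℝ) :
    gaussianPDFReal 0 v (-x) = gaussianPDFReal 0 v x := by
  simp [gaussianPDFReal_def]

lemma integral_gaussianPDFReal_Iic_zero {v : ℝ≥0} (hv : v ≠ 0) :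
    ∫ x in Iic 0, gaussianPDFReal 0 v x = 1 / 2 := by
  have hsymm : ∫ x in Iic 0, gaussianPDFReal 0 v x = ∫ x in Ioi 0, gaussianPDFReal 0 v x := by
    simpa [gaussianPDFReal_zero_neg] using integral_comp_neg_Iic 0 (gaussianPDFReal 0 v)
  have htotal := integral_gaussianPDFReal_eq_one 0 hv
  rw [← intervalIntegral.integral_Iic_add_Ioi (integrable_gaussianPDFReal 0 v).integrableOn
    (integrable_gaussianPDFReal 0 v).integrableOn, ← hsymm] at htotal
  linarith

lemma intervalIntegral_gaussianPDFReal (hσ : 0 < σ) (ζ : ℝ) :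
    ∫ x in 0..ζ / 2, gaussianPDFReal 0 ⟨σ ^ 2, sq_nonneg σ⟩ x = phi σ ζ / 2 := by
  have hpdf : ∀ x, gaussianPDFReal 0 ⟨σ ^ 2, sq_nonneg σ⟩ x
      = (√(2 * π) * σ)⁻¹ * Real.exp (-(x / σ) ^ 2 / 2) := by
    intro x
    change (√(2 * π * σ ^ 2))⁻¹ * Real.exp (-(x - 0) ^ 2 / (2 * σ ^ 2)) = _
    rw [Real.sqrt_mul (by positivity), Real.sqrt_sq hσ.le, sub_zero, div_pow]
    congr 2
    field_simp
  simp_rw [hpdf, intervalIntegral.integral_const_mul]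
  rw [intervalIntegral.integral_comp_div (fun t => Real.exp (-t ^ 2 / 2)) hσ.ne', phi, zero_div,
    smul_eq_mul, div_div]
  field_simp

lemma phi_nonneg (hσ : 0 < σ) {ζ : ℝ} (hζ : 0 ≤ ζ) : 0 ≤ phi σ ζ :=
  mul_nonneg (by positivity)
    (intervalIntegral.integral_nonneg (by positivity) fun _ _ => (Real.exp_pos _).le)

lemma gaussianReal_Iic_half (hσ : 0 < σ) (ζ : ℝ) :
    gaussianReal 0 ⟨σ ^ 2, sq_nonneg σ⟩ (Iic (ζ / 2)) = .ofReal (1 / 2 + phi σ ζ / 2) := by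
  have hv := mk_sq_ne_zero hσ.ne'
  have hint : ∀ x, IntegrableOn (gaussianPDFReal 0 ⟨σ ^ 2, sq_nonneg σ⟩) (Iic x) :=
    fun _ => (integrable_gaussianPDFReal 0 _).integrableOn
  rw [gaussianReal_apply_eq_integral 0 hv, ← integral_gaussianPDFReal_Iic_zero hv,
    ← intervalIntegral_gaussianPDFReal hσ,
    ← intervalIntegral.integral_Iic_sub_Iic (hint 0) (hint _), add_sub_cancel]

lemma gaussianReal_zero_Ici_neg (v : ℝ≥0) (x : ℝ) :
    gaussianReal 0 v (Ici (-x)) = gaussianReal 0 v (Iic x) := by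
  have hpre : Neg.neg ⁻¹' Ici (-x) = Iic x := by
    ext t
    simp
  rw [← hpre, ← Measure.map_apply measurable_neg measurableSet_Ici, gaussianReal_map_neg, neg_zero]

lemma gaussianReal_Icc_half (hσ : 0 < σ) {ζ : ℝ} (hζ : 0 ≤ ζ) :
    gaussianReal 0 ⟨σ ^ 2, sq_nonneg σ⟩ (Icc (-(ζ / 2)) (ζ / 2)) = .ofReal (phi σ ζ) := by
  set f := gaussianPDFReal 0 ⟨σ ^ 2, sq_nonneg σ⟩
  have hf : ∀ a b, IntervalIntegrable f volume a b :=
    fun _ _ => (integrable_gaussianPDFReal 0 _).intervalIntegrable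
  have hsymm : ∫ x in -(ζ / 2)..0, f x = ∫ x in 0..ζ / 2, f x := by
    calc _ = ∫ x in 0..ζ / 2, f (-x) := by
          simpa only [neg_zero] using
            (intervalIntegral.integral_comp_neg (a := 0) (b := ζ / 2) f).symm
      _ = _ := intervalIntegral.integral_congr fun x _ => gaussianPDFReal_zero_neg _ x
  rw [gaussianReal_apply_eq_integral 0 (mk_sq_ne_zero hσ.ne'), integral_Icc_eq_integral_Ioc,
    ← intervalIntegral.integral_of_le (by linarith),
    ← intervalIntegral.integral_add_adjacent_intervals (b := 0) (hf _ _) (hf _ _), hsymm,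
    intervalIntegral_gaussianPDFReal hσ, add_halves]

lemma gaussianReal_setOf_clampInt_eq (hσ : 0 < σ) {a b c : ℤ} (hab : a < b)
    (hc : c ∈ Finset.Icc a b) {r : ℝ} (hr : 0 < r) :
    gaussianReal 0 ⟨σ ^ 2, sq_nonneg σ⟩ {t | clampInt a b (c + t / r) = c}
      = .ofReal (if c = a ∨ c = b then 1 / 2 + phi σ r / 2 else phi σ r) := by
  obtain ⟨hac, hcb⟩ := Finset.mem_Icc.1 hc
  have := nullSingletonClass_gaussianReal (μ := 0) (mk_sq_ne_zero hσ.ne')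
  set O := {t : ℝ | (c = a ∨ -(r / 2) < t) ∧ (c = b ∨ t < r / 2)}
  set C := {t : ℝ | (c = a ∨ -(r / 2) ≤ t) ∧ (c = b ∨ t ≤ r / 2)}
  have hOS : O ⊆ {t | clampInt a b (c + t / r) = c} := by
    rintro t ⟨hlo, hhi⟩
    refine (clampInt_eq_iff hab hac hcb _).2 ⟨hlo.imp_right fun h => le_nround_of_sub_half_lt ?_,
      hhi.imp_right fun h => nround_le_of_lt_add_half ?_⟩
    · linarith [(lt_div_iff₀ hr).2 (by linarith : -(1 / 2) * r < t)]
    · linarith [(div_lt_iff₀ hr).2 (by linarith : t < 1 / 2 * r)]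
  have hSC : {t | clampInt a b (c + t / r) = c} ⊆ C := by
    intro t ht
    obtain ⟨hlo, hhi⟩ := (clampInt_eq_iff hab hac hcb _).1 ht
    refine ⟨hlo.imp_right fun h => ?_, hhi.imp_right fun h => ?_⟩
    · have := sub_half_le_of_le_nround h
      linarith [(le_div_iff₀ hr).1 (by linarith : -(1 / 2) ≤ t / r)]
    · have := le_add_half_of_nround_le h
      linarith [(div_le_iff₀ hr).1 (by linarith : t / r ≤ 1 / 2)]
  have hCO : C \ O ⊆ {-(r / 2), r / 2} := by
    rintro t ⟨⟨hlo, hhi⟩, htO⟩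
    by_contra hne
    simp only [mem_insert_iff, mem_singleton_iff, not_or] at hne
    exact htO ⟨hlo.imp_right fun h => h.lt_of_ne (Ne.symm hne.1),
      hhi.imp_right fun h => h.lt_of_ne hne.2⟩
  rw [measure_eq_measure_larger_of_between_null_sdiff hOS hSC
    (measure_mono_null hCO ((toFinite _).measure_zero _))]
  by_cases hca : c = a
  · have hC : C = Iic (r / 2) := by ext t; simp [C, hca, hab.ne]
    rw [if_pos (Or.inl hca), hC, gaussianReal_Iic_half hσ]
  by_cases hcb' : c = b
  · have hC : C = Ici (-(r / 2)) := by ext t; simp [C, hcb', hab.ne']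
    rw [if_pos (Or.inr hcb'), hC, ← gaussianReal_Iic_half hσ]
    exact gaussianReal_zero_Ici_neg _ _
  · have hC : C = Icc (-(r / 2)) (r / 2) := by ext t; simp [C, hca, hcb']
    rw [if_neg (by tauto), hC, gaussianReal_Icc_half hσ hr.le]

lemma toReal_sum_gaussianReal_setOf_clampInt_eq (hσ : 0 < σ) {a b : ℤ} (hab : a < b) {r : ℝ}
    (hr : 0 < r) :
    (∑ c ∈ Finset.Icc a b,
        gaussianReal 0 ⟨σ ^ 2, sq_nonneg σ⟩ {t | clampInt a b (c + t / r) = c}).toReal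
      = 1 + ((b - a : ℤ) : ℝ) * phi σ r := by
  have hphi := phi_nonneg hσ hr.le
  have hba : (0 : ℝ) ≤ ((b - a : ℤ) : ℝ) := by exact_mod_cast (sub_pos.2 hab).le
  rw [Finset.sum_congr rfl fun c hc => gaussianReal_setOf_clampInt_eq hσ hab hc hr,
    ← ENNReal.ofReal_sum_of_nonneg fun c _ => by split_ifs <;> positivity,
    Finset.sum_Icc_ite_endpoints hab]
  have hsum : 2 * (1 / 2 + phi σ r / 2) + ((b - a - 1 : ℤ) : ℝ) * phi σ r
      = 1 + ((b - a : ℤ) : ℝ) * phi σ r := by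
    push_cast
    ring
  rw [hsum, ENNReal.toReal_ofReal (by positivity)]

end Gaussian

theorem success_prob_boxBabai_uniform_general
    {n : ℕ}
    (R : Matrix (Fin n) (Fin n) ℝ)
    (hupper : ∀ i j : Fin n, j < i → R i j = 0)
    (hdiag : ∀ i : Fin n, 0 < R i i)
    (σ : ℝ) (hσ : 0 < σ)
    (l u : Fin n → ℤ) (hlu : ∀ i, l i < u i)
    {Ω : Type} [MeasurableSpace Ω] (P : Measure Ω)
    (v : Ω → Fin n → ℝ) (hmv : Measurable v)
    (hv : Measure.map v P = Measure.pi fun _ : Fin n => gaussianReal 0 ⟨σ ^ 2, sq_nonneg σ⟩)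
    (B : Finset (Fin n → ℤ)) (hB : B = Fintype.piFinset fun i => Finset.Icc (l i) (u i))
    (xhat : Ω → Fin n → ℤ) (hmx : Measurable xhat)
    (hmem : ∀ ω, xhat ω ∈ B)
    (hunif : ∀ b ∈ B, P {ω | xhat ω = b} = (B.card : ℝ≥0∞)⁻¹)
    (hindep : IndepFun xhat v P) :
    (P {ω | babaiDetector R l u (fun i => (R *ᵥ (fun j => (xhat ω j : ℝ))) i + v ω i) = xhat ω}).toReal
      = ∏ i, (1 / ((u i - l i + 1 : ℤ) : ℝ)
              + (((u i - l i : ℤ) : ℝ) / ((u i - l i + 1 : ℤ) : ℝ)) * phi σ (R i i)) := by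
  set T : Fin n → ℤ → Set ℝ := fun i c => {t | clampInt (l i) (u i) (c + t / R i i) = c}
  have hT : ∀ b : Fin n → ℤ, MeasurableSet (univ.pi fun i => T i (b i)) := fun b =>
    .univ_pi fun i => measurableSet_eq_fun ((measurable_clampInt _ _).comp (by fun_prop))
      measurable_const
  have hevent : {ω | babaiDetector R l u (fun i => (R *ᵥ (fun j => (xhat ω j : ℝ))) i + v ω i)
      = xhat ω} = {ω | v ω ∈ univ.pi fun i => T i (xhat ω i)} := by
    ext ω
    exact (babaiDetector_mulVec_add_eq_iff l u hupper (fun i => (hdiag i).ne') _ _).trans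
      mem_univ_pi.symm
  -- the anonymous constructor `⟨σ ^ 2, _⟩` hides this instance from instance search
  have : IsProbabilityMeasure (gaussianReal 0 ⟨σ ^ 2, sq_nonneg σ⟩) :=
    instIsProbabilityMeasureGaussianReal 0 _
  rw [hevent, hindep.measure_setOf_mem_eq_sum hmx hmv hmem hT, hv]
  calc (∑ b ∈ B, P (xhat ⁻¹' {b}) * Measure.pi _ (univ.pi fun i => T i (b i))).toReal
      = ((B.card : ℝ≥0∞)⁻¹ * ∏ i, ∑ c ∈ Finset.Icc (l i) (u i),
          gaussianReal 0 ⟨σ ^ 2, sq_nonneg σ⟩ (T i c)).toReal := by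
        rw [Finset.prod_univ_sum, ← hB, Finset.mul_sum]
        refine congrArg _ (Finset.sum_congr rfl fun b hb => ?_)
        rw [← hunif b hb, Measure.pi_pi]
        rfl
    _ = (∏ i, ((u i - l i + 1 : ℤ) : ℝ))⁻¹ * ∏ i, (1 + ((u i - l i : ℤ) : ℝ) * phi σ (R i i)) := by
        simp_rw [ENNReal.toReal_mul, ENNReal.toReal_inv, ENNReal.toReal_natCast,
          ENNReal.toReal_prod, T, toReal_sum_gaussianReal_setOf_clampInt_eq hσ (hlu _) (hdiag _),
          hB, Int.cast_card_piFinset_Icc fun i => (hlu i).le]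
    _ = _ := by
        rw [← Finset.prod_inv_distrib, ← Finset.prod_mul_distrib]
        exact Finset.prod_congr rfl fun i _ => by field_simp

/-- Success probability of the box-constrained Babai detector for a parameter uniformly
distributed over the box (Theorem 4 of the paper). -/
theorem success_prob_boxBabai_uniform
    {n : ℕ} (hn : 1 ≤ n)
    (R : Matrix (Fin n) (Fin n) ℝ)
    (hupper : ∀ i j : Fin n, j < i → R i j = 0)
    (hdiag : ∀ i : Fin n, 0 < R i i)
    (σ : ℝ) (hσ : 0 < σ)
    (l u : Fin n → ℤ) (hlu : ∀ i, l i < u i)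
    {Ω : Type} [MeasurableSpace Ω] (P : Measure Ω) [IsProbabilityMeasure P]
    (v : Ω → Fin n → ℝ) (hmv : Measurable v)
    (hv : Measure.map v P = Measure.pi fun _ : Fin n => gaussianReal 0 ⟨σ ^ 2, sq_nonneg σ⟩)
    (B : Finset (Fin n → ℤ)) (hB : B = Fintype.piFinset fun i => Finset.Icc (l i) (u i))
    (xhat : Ω → Fin n → ℤ) (hmx : Measurable xhat)
    (hmem : ∀ ω, xhat ω ∈ B)
    (hunif : ∀ b ∈ B, P {ω | xhat ω = b} = (B.card : ℝ≥0∞)⁻¹)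
    (hindep : IndepFun xhat v P) :
    (P {ω | babaiDetector R l u (fun i => (R *ᵥ (fun j => (xhat ω j : ℝ))) i + v ω i) = xhat ω}).toReal
      = ∏ i, (1 / ((u i - l i + 1 : ℤ) : ℝ)
              + (((u i - l i : ℤ) : ℝ) / ((u i - l i + 1 : ℤ) : ℝ)) * phi σ (R i i)) :=
  success_prob_boxBabai_uniform_general R hupper hdiag σ hσ l u hlu P v hmv hv B hB xhat hmx hmem
    hunif hindep
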